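/- Let Q be a d×m row-substochastic matrix (all entries nonnegative and each row sum at most 1) and let Λ be an m×m tail-dependence matrix. Then L(Q Λ Qᵀ), obtained from Q Λ Qᵀ by replacing all diagonal entries with 1, is a d×d tail-dependence matrix. In particular, L(Q Qᵀ) is a tail-dependence matrix for every row-substochastic Q, and L(p·pᵀ) is a tail-dependence matrix for every p ∈ [0,1]^d (Proposition 4.4). -/

import Mathlib

open MeasureTheory ProbabilityTheory Filter Set

noncomputable section

/-- A Bernoulli-compatible matrix: `B i j = E[X i * X j]` for some random vector `X`
taking values in `{0,1}^d` on some probability space. -/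
def IsBernoulliCompatible {d : ℕ} (B : Matrix (Fin d) (Fin d) ℝ) : Prop :=
  ∃ (Ω : Type) (_ : MeasurableSpace Ω) (μ : Measure Ω),
    IsProbabilityMeasure μ ∧
    ∃ X : Ω → Fin d → ℝ, Measurable X ∧
      (∀ ω i, X ω i = 0 ∨ X ω i = 1) ∧
      (∀ i j, B i j = ∫ ω, X ω i * X ω j ∂μ)

/-- The (lower) tail-dependence coefficient of `Yi` and `Yj` exists and equals `l`:
`P(Yi ≤ u, Yj ≤ u)/u → l` as `u ↓ 0`. -/
def HasTailDepCoeff {Ω : Type} [MeasurableSpace Ω] (μ : Measure Ω)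
    (Yi Yj : Ω → ℝ) (l : ℝ) : Prop :=
  Filter.Tendsto (fun u : ℝ => (μ {ω | Yi ω ≤ u ∧ Yj ω ≤ u}).toReal / u)
    (nhdsWithin 0 (Set.Ioi 0)) (nhds l)

/-- The uniform distribution on `[0,1]`. -/
def stdUniform : Measure ℝ := volume.restrict (Set.Icc (0:ℝ) 1)

/-- A tail-dependence matrix: the matrix of pairwise (lower) tail-dependence coefficients
of some random vector with standard uniform margins. -/
def IsTailDependenceMatrix {d : ℕ} (Λ : Matrix (Fin d) (Fin d) ℝ) : Prop :=
  ∃ (Ω : Type) (_ : MeasurableSpace Ω) (μ : Measure Ω),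
    IsProbabilityMeasure μ ∧
    ∃ Y : Ω → Fin d → ℝ, Measurable Y ∧
      (∀ i, μ.map (fun ω => Y ω i) = stdUniform) ∧
      (∀ i j, HasTailDepCoeff μ (fun ω => Y ω i) (fun ω => Y ω j) (Λ i j))

/-- The map `L`: replace all diagonal entries of a square matrix by `1`. -/
def diagOne {d : ℕ} (A : Matrix (Fin d) (Fin d) ℝ) : Matrix (Fin d) (Fin d) ℝ :=
  Matrix.of fun i j => if i = j then 1 else A i j

open Topology

/-!
Attach to the random vector `Y` realising `Λ` independent standard uniforms `U₁, …, U_d`, and let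
each output coordinate `a` pick, independently of everything else, the input `Y k` with
probability `Q a k` and its own `U a` with the remaining probability `1 - ∑ k, Q a k`. Each output
is a mixture of uniforms, hence uniform, and conditioning on the two chosen indices shows that the
tail-dependence coefficient of two distinct outputs `a ≠ b` is `∑ k l, Q a k Λ k l Q b l`: the
private uniforms are independent of everything else, so they contribute no tail dependence. The
two special cases take `Λ = 1` and the single column `Q = p`.
-/

instance : IsProbabilityMeasure stdUniform :=
  ⟨by simp [stdUniform, Measure.restrict_apply, Real.volume_Icc]⟩

theorem stdUniform_Iic {u : ℝ} (hu : u ∈ Icc (0 : ℝ) 1) :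
    stdUniform (Iic u) = ENNReal.ofReal u := by
  have hIcc : Iic u ∩ Icc 0 1 = Icc 0 u := by
    ext x
    simp only [mem_inter_iff, mem_Iic, mem_Icc]
    exact ⟨fun h => ⟨h.2.1, h.1⟩, fun h => ⟨h.2, h.1, h.2.trans hu.2⟩⟩
  rw [stdUniform, Measure.restrict_apply measurableSet_Iic, hIcc, Real.volume_Icc, sub_zero]

theorem measure_prod_setOf_fst_mem_eq_sum {Ω Ω' α : Type*} [MeasurableSpace Ω]
    [MeasurableSpace Ω'] [Fintype α] [MeasurableSpace α] [MeasurableSingletonClass α]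
    (μ : Measure Ω) (ν : Measure Ω') [SFinite ν] {K : Ω' → α} (hK : Measurable K) {S : α → Set Ω}
    (hS : ∀ a, MeasurableSet (S a)) :
    μ.prod ν {p | p.1 ∈ S (K p.2)} = ∑ a, μ (S a) * ν (K ⁻¹' {a}) := by
  have hU : {p : Ω × Ω' | p.1 ∈ S (K p.2)} = ⋃ a, S a ×ˢ (K ⁻¹' {a}) := by
    ext p
    simp
  have hdisj : Pairwise (Function.onFun Disjoint fun a => S a ×ˢ (K ⁻¹' {a})) := fun a b hab =>
    Disjoint.set_prod_right ((disjoint_singleton.mpr hab).preimage K) _ _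
  rw [hU, measure_iUnion hdisj fun a => (hS a).prod (hK (measurableSet_singleton a)), tsum_fintype]
  simp only [Measure.prod_prod]

section TailDependence

variable {Ω Ω' : Type} [MeasurableSpace Ω] [MeasurableSpace Ω'] {μ : Measure Ω}

theorem measure_le_of_map_eq_stdUniform {Y : Ω → ℝ} (h : μ.map Y = stdUniform) {u : ℝ}
    (hu : u ∈ Icc (0 : ℝ) 1) : μ {ω | Y ω ≤ u} = ENNReal.ofReal u := by
  have hY : AEMeasurable Y μ := .of_map_ne_zero (h ▸ IsProbabilityMeasure.ne_zero _)
  rw [← stdUniform_Iic hu, ← h, Measure.map_apply_of_aemeasurable hY measurableSet_Iic]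
  rfl

theorem eventually_mem_Ioo_zero_one : ∀ᶠ u in 𝓝[>] (0 : ℝ), u ∈ Ioo (0 : ℝ) 1 :=
  Ioo_mem_nhdsGT one_pos

theorem hasTailDepCoeff_self {Y : Ω → ℝ} (h : μ.map Y = stdUniform) :
    HasTailDepCoeff μ Y Y 1 := by
  refine tendsto_const_nhds.congr' ?_
  filter_upwards [eventually_mem_Ioo_zero_one] with u hu
  simp only [and_self, measure_le_of_map_eq_stdUniform h (Ioo_subset_Icc_self hu),
    ENNReal.toReal_ofReal hu.1.le, div_self hu.1.ne']

theorem ProbabilityTheory.IndepFun.hasTailDepCoeff_zero {Yi Yj : Ω → ℝ} (hind : IndepFun Yi Yj μ)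
    (hi : μ.map Yi = stdUniform) (hj : μ.map Yj = stdUniform) : HasTailDepCoeff μ Yi Yj 0 := by
  refine (tendsto_nhdsWithin_of_tendsto_nhds tendsto_id).congr' ?_
  filter_upwards [eventually_mem_Ioo_zero_one] with u hu
  have hu' := Ioo_subset_Icc_self hu
  have hprod : μ {ω | Yi ω ≤ u ∧ Yj ω ≤ u} = ENNReal.ofReal u * ENNReal.ofReal u :=
    calc μ {ω | Yi ω ≤ u ∧ Yj ω ≤ u} = μ {ω | Yi ω ≤ u} * μ {ω | Yj ω ≤ u} :=
          hind.measure_inter_preimage_eq_mul _ _ measurableSet_Iic measurableSet_Iic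
      _ = ENNReal.ofReal u * ENNReal.ofReal u := by
          rw [measure_le_of_map_eq_stdUniform hi hu', measure_le_of_map_eq_stdUniform hj hu']
  rw [hprod, ← ENNReal.ofReal_mul hu.1.le, ENNReal.toReal_ofReal (mul_nonneg hu.1.le hu.1.le),
    mul_div_cancel_right₀ _ hu.1.ne', id]

theorem HasTailDepCoeff.comp_measurePreserving {μ' : Measure Ω'} {f : Ω' → Ω}
    (hf : MeasurePreserving f μ' μ) {Yi Yj : Ω → ℝ} (hYi : Measurable Yi) (hYj : Measurable Yj)
    {l : ℝ} (h : HasTailDepCoeff μ Yi Yj l) : HasTailDepCoeff μ' (Yi ∘ f) (Yj ∘ f) l := by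
  have hpre (u : ℝ) : μ' {ω | Yi (f ω) ≤ u ∧ Yj (f ω) ≤ u} = μ {ω | Yi ω ≤ u ∧ Yj ω ≤ u} :=
    hf.measure_preimage ((measurableSet_le hYi measurable_const).inter
      (measurableSet_le hYj measurable_const)).nullMeasurableSet
  simpa only [HasTailDepCoeff, Function.comp_apply, hpre] using h

end TailDependence

structure HasTailDepMatrix {Ω ι : Type} [MeasurableSpace Ω] (μ : Measure Ω) (Y : Ω → ι → ℝ)
    (Λ : Matrix ι ι ℝ) : Prop where
  measurable : Measurable Y
  map_eq : ∀ i, μ.map (fun ω => Y ω i) = stdUniform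
  hasTailDepCoeff : ∀ i j, HasTailDepCoeff μ (fun ω => Y ω i) (fun ω => Y ω j) (Λ i j)

theorem isTailDependenceMatrix_iff {d : ℕ} {Λ : Matrix (Fin d) (Fin d) ℝ} :
    IsTailDependenceMatrix Λ ↔ ∃ (Ω : Type) (_ : MeasurableSpace Ω) (μ : Measure Ω),
      IsProbabilityMeasure μ ∧ ∃ Y : Ω → Fin d → ℝ, HasTailDepMatrix μ Y Λ := by
  constructor
  · rintro ⟨Ω, _, μ, hμ, Y, hY, hmap, htail⟩
    exact ⟨Ω, _, μ, hμ, Y, hY, hmap, htail⟩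
  · rintro ⟨Ω, _, μ, hμ, Y, hY, hmap, htail⟩
    exact ⟨Ω, _, μ, hμ, Y, hY, hmap, htail⟩

namespace HasTailDepMatrix

variable {Ω Ω' ι : Type} [MeasurableSpace Ω] [MeasurableSpace Ω'] {μ : Measure Ω}
  {Y : Ω → ι → ℝ} {Λ : Matrix ι ι ℝ}

theorem apply_self (h : HasTailDepMatrix μ Y Λ) (i : ι) : Λ i i = 1 :=
  tendsto_nhds_unique (h.hasTailDepCoeff i i) (hasTailDepCoeff_self (h.map_eq i))

theorem isTailDependenceMatrix_diagOne [IsProbabilityMeasure μ] {d : ℕ} {Y : Ω → Fin d → ℝ}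
    {M A : Matrix (Fin d) (Fin d) ℝ} (h : HasTailDepMatrix μ Y M)
    (hMA : ∀ i j, i ≠ j → M i j = A i j) : IsTailDependenceMatrix (diagOne A) := by
  have hM : M = diagOne A := by
    ext i j
    by_cases hij : i = j
    · subst hij; simp [diagOne, h.apply_self]
    · simp [diagOne, hij, hMA i j hij]
  exact isTailDependenceMatrix_iff.mpr ⟨Ω, _, μ, inferInstance, Y, hM ▸ h⟩

theorem pi [Fintype ι] [DecidableEq ι] :
    HasTailDepMatrix (Measure.pi fun _ : ι => stdUniform) (fun ω => ω) 1 where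
  measurable := measurable_id
  map_eq i := (measurePreserving_eval _ i).map_eq
  hasTailDepCoeff i j := by
    rcases eq_or_ne i j with rfl | hij
    · simpa using hasTailDepCoeff_self (measurePreserving_eval _ i).map_eq
    · rw [Matrix.one_apply_ne hij]
      exact ((iIndepFun_pi (X := fun _ => id) fun _ => aemeasurable_id).indepFun hij
        ).hasTailDepCoeff_zero (measurePreserving_eval _ i).map_eq
          (measurePreserving_eval _ j).map_eq

theorem prod {ι' : Type} {ν : Measure Ω'} [IsProbabilityMeasure μ] [IsProbabilityMeasure ν]
    {Y' : Ω' → ι' → ℝ} {Λ' : Matrix ι' ι' ℝ} (h : HasTailDepMatrix μ Y Λ)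
    (h' : HasTailDepMatrix ν Y' Λ') :
    HasTailDepMatrix (μ.prod ν) (fun p => Sum.elim (Y p.1) (Y' p.2))
      (Matrix.fromBlocks Λ 0 0 Λ') := by
  have hY (i : ι) : Measurable fun ω => Y ω i := (measurable_pi_apply i).comp h.measurable
  have hY' (i : ι') : Measurable fun ω => Y' ω i := (measurable_pi_apply i).comp h'.measurable
  have hmap (i : ι) : (μ.prod ν).map (fun p => Y p.1 i) = stdUniform :=
    (Measure.map_map (hY i) measurable_fst).symm.trans
      (by rw [measurePreserving_fst.map_eq, h.map_eq i])
  have hmap' (i : ι') : (μ.prod ν).map (fun p => Y' p.2 i) = stdUniform :=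
    (Measure.map_map (hY' i) measurable_snd).symm.trans
      (by rw [measurePreserving_snd.map_eq, h'.map_eq i])
  refine ⟨measurable_pi_iff.mpr ?_, ?_, ?_⟩
  · rintro (i | i)
    exacts [(hY i).comp measurable_fst, (hY' i).comp measurable_snd]
  · rintro (i | i)
    exacts [hmap i, hmap' i]
  · rintro (i | i) (j | j)
    · exact (h.hasTailDepCoeff i j).comp_measurePreserving measurePreserving_fst (hY i) (hY j)
    · exact (indepFun_prod (hY i) (hY' j)).hasTailDepCoeff_zero (hmap i) (hmap' j)
    · exact (indepFun_prod (hY j) (hY' i)).symm.hasTailDepCoeff_zero (hmap' i) (hmap j)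
    · exact (h'.hasTailDepCoeff i j).comp_measurePreserving measurePreserving_snd (hY' i) (hY' j)

-- The product measure makes the random indices `K · a` independent of `Y`.
theorem mixture [IsProbabilityMeasure μ] {ν : Measure Ω'} [IsProbabilityMeasure ν] [Fintype ι]
    [MeasurableSpace ι] [MeasurableSingletonClass ι] {κ : Type} (h : HasTailDepMatrix μ Y Λ)
    {K : Ω' → κ → ι} (hK : Measurable K) :
    HasTailDepMatrix (μ.prod ν) (fun p a => Y p.1 (K p.2 a))
      (Matrix.of fun a b => ∑ k, ∑ l, (ν {η | K η a = k ∧ K η b = l}).toReal * Λ k l) := by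
  have hY (k : ι) : Measurable fun ω => Y ω k := (measurable_pi_apply k).comp h.measurable
  have hKa (a : κ) : Measurable fun η => K η a := (measurable_pi_apply a).comp hK
  have hYK (a : κ) : Measurable fun p : Ω × Ω' => Y p.1 (K p.2 a) :=
    (measurable_from_prod_countable_left (f := fun q : Ω × ι => Y q.1 q.2) hY).comp
      (measurable_fst.prodMk ((hKa a).comp measurable_snd))
  refine ⟨measurable_pi_lambda _ hYK, fun a => ?_, fun a b => ?_⟩
  · ext s hs
    have hsum : ∑ k, ν ((fun η => K η a) ⁻¹' {k}) = 1 := by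
      rw [sum_measure_preimage_singleton _ fun k _ => hKa a (measurableSet_singleton k)]
      simp
    rw [Measure.map_apply (hYK a) hs]
    change μ.prod ν {p | p.1 ∈ (fun k => (fun ω => Y ω k) ⁻¹' s) (K p.2 a)} = _
    rw [measure_prod_setOf_fst_mem_eq_sum μ ν (hKa a) fun k => hY k hs]
    simp_rw [← Measure.map_apply (hY _) hs, h.map_eq, ← Finset.mul_sum, hsum, mul_one]
  · set S : ι × ι → ℝ → Set Ω := fun kl u => {ω | Y ω kl.1 ≤ u ∧ Y ω kl.2 ≤ u}
    set P : ι × ι → ℝ := fun kl => (ν ((fun η => (K η a, K η b)) ⁻¹' {kl})).toReal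
    have hsplit (u : ℝ) :
        ((μ.prod ν) {p | Y p.1 (K p.2 a) ≤ u ∧ Y p.1 (K p.2 b) ≤ u}).toReal / u =
          ∑ kl, (μ (S kl u)).toReal / u * P kl := by
      change ((μ.prod ν) {p | p.1 ∈ (fun kl => S kl u) (K p.2 a, K p.2 b)}).toReal / u = _
      rw [measure_prod_setOf_fst_mem_eq_sum μ ν ((hKa a).prodMk (hKa b)) (S := fun kl => S kl u)
          fun kl => (measurableSet_le (hY kl.1) measurable_const).inter
            (measurableSet_le (hY kl.2) measurable_const),
        ENNReal.toReal_sum fun _ _ => ENNReal.mul_ne_top (measure_ne_top _ _) (measure_ne_top _ _),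
        Finset.sum_div]
      simp only [ENNReal.toReal_mul, P, div_mul_eq_mul_div]
    have hentry : ∑ k, ∑ l, (ν {η | K η a = k ∧ K η b = l}).toReal * Λ k l =
        ∑ kl, Λ kl.1 kl.2 * P kl := by
      rw [← Finset.sum_product']
      refine Finset.sum_congr rfl fun kl _ => ?_
      simp only [P, preimage, mem_singleton_iff, Prod.ext_iff, mul_comm]
    simp only [HasTailDepCoeff, Matrix.of_apply, hentry, hsplit]
    exact tendsto_finsetSum _ fun kl _ => (h.hasTailDepCoeff kl.1 kl.2).mul_const _

theorem isTailDependenceMatrix_diagOne_mul_mul_transpose [IsProbabilityMeasure μ] [Fintype ι]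
    (h : HasTailDepMatrix μ Y Λ) {d : ℕ} (W : Matrix (Fin d) ι ℝ) (hW0 : ∀ a k, 0 ≤ W a k)
    (hW1 : ∀ a, ∑ k, W a k = 1) : IsTailDependenceMatrix (diagOne (W * Λ * W.transpose)) := by
  let _ : MeasurableSpace ι := ⊤
  -- the random indices `η a` are independent, `η a` having law the `a`-th row of `W`
  let row (a : Fin d) : PMF ι := PMF.ofFintype (fun k => ENNReal.ofReal (W a k)) <| by
    rw [← ENNReal.ofReal_sum_of_nonneg fun k _ => hW0 a k, hW1 a, ENNReal.ofReal_one]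
  let ν : Measure (Fin d → ι) := Measure.pi fun a => (row a).toMeasure
  have hlaw (a : Fin d) (k : ι) : (ν {η | η a = k}).toReal = W a k := by
    have hpre : ν {η | η a = k} = (row a).toMeasure {k} :=
      (measurePreserving_eval (fun a => (row a).toMeasure) a).measure_preimage
        (s := {k}) (measurableSet_singleton k).nullMeasurableSet
    rw [hpre, PMF.toMeasure_apply_singleton _ _ (measurableSet_singleton k), PMF.ofFintype_apply,
      ENNReal.toReal_ofReal (hW0 a k)]
  have hjoint {a b : Fin d} (hab : a ≠ b) (k l : ι) :
      (ν {η | η a = k ∧ η b = l}).toReal = W a k * W b l := by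
    rw [← hlaw a k, ← hlaw b l, ← ENNReal.toReal_mul]
    congr 1
    exact ((iIndepFun_pi (μ := fun a => (row a).toMeasure) (X := fun _ => (id : ι → ι))
      fun _ => aemeasurable_id).indepFun hab
      ).measure_inter_preimage_eq_mul {k} {l} (measurableSet_singleton k)
        (measurableSet_singleton l)
  refine (h.mixture (ν := ν) (K := fun η => η) measurable_id).isTailDependenceMatrix_diagOne
    fun a b hab => ?_
  simp only [Matrix.of_apply, hjoint hab, Matrix.mul_apply, Matrix.transpose_apply, Finset.sum_mul]
  rw [Finset.sum_comm]
  exact Finset.sum_congr rfl fun _ _ => Finset.sum_congr rfl fun _ _ => by ring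

end HasTailDepMatrix

theorem isTailDependenceMatrix_one (m : ℕ) :
    IsTailDependenceMatrix (1 : Matrix (Fin m) (Fin m) ℝ) :=
  isTailDependenceMatrix_iff.mpr ⟨_, _, _, inferInstance, _, HasTailDepMatrix.pi⟩

theorem diagOne_add_diagonal {d : ℕ} (A : Matrix (Fin d) (Fin d) ℝ) (v : Fin d → ℝ) :
    diagOne (A + Matrix.diagonal v) = diagOne A := by
  ext i j
  by_cases hij : i = j <;> simp [diagOne, hij]

def slackExtension {κ ι : Type*} [Fintype ι] [DecidableEq κ] (Q : Matrix κ ι ℝ) :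
    Matrix κ (ι ⊕ κ) ℝ :=
  Matrix.fromCols Q (Matrix.diagonal fun a => 1 - ∑ j, Q a j)

section slackExtension

variable {κ ι : Type*} [Fintype ι] [DecidableEq κ] (Q : Matrix κ ι ℝ)

theorem slackExtension_nonneg (hQ0 : ∀ a j, 0 ≤ Q a j) (hQ1 : ∀ a, ∑ j, Q a j ≤ 1) :
    ∀ a k, 0 ≤ slackExtension Q a k := by
  rintro a (j | c)
  · exact hQ0 a j
  · by_cases hac : a = c
    · simpa [slackExtension, hac] using hQ1 c
    · simp [slackExtension, hac]

theorem sum_slackExtension_apply [Fintype κ] (a : κ) : ∑ k, slackExtension Q a k = 1 := by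
  simp [slackExtension, Fintype.sum_sum_type, Matrix.diagonal_apply]

theorem slackExtension_mul_fromBlocks_mul_transpose [Fintype κ] (Λ : Matrix ι ι ℝ) :
    slackExtension Q * Matrix.fromBlocks Λ 0 0 (1 : Matrix κ κ ℝ) * (slackExtension Q).transpose =
      Q * Λ * Q.transpose + Matrix.diagonal fun a => (1 - ∑ j, Q a j) ^ 2 := by
  rw [slackExtension, Matrix.fromCols_mul_fromBlocks, Matrix.transpose_fromCols,
    Matrix.fromCols_mul_fromRows]
  simp [sq]

end slackExtension

theorem isTailDependenceMatrix_diagOne_substochastic {d m : ℕ} (Q : Matrix (Fin d) (Fin m) ℝ)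
    (hQ0 : ∀ i j, 0 ≤ Q i j) (hQ1 : ∀ i, ∑ j, Q i j ≤ 1) {Λ : Matrix (Fin m) (Fin m) ℝ}
    (hΛ : IsTailDependenceMatrix Λ) : IsTailDependenceMatrix (diagOne (Q * Λ * Q.transpose)) := by
  obtain ⟨Ω, _, μ, _, Y, hY⟩ := isTailDependenceMatrix_iff.mp hΛ
  -- the slack columns read off independent uniforms, one for each output coordinate
  have hYU := hY.prod (HasTailDepMatrix.pi (ι := Fin d))
  have := hYU.isTailDependenceMatrix_diagOne_mul_mul_transpose (slackExtension Q)
    (slackExtension_nonneg Q hQ0 hQ1) (sum_slackExtension_apply Q)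
  rwa [slackExtension_mul_fromBlocks_mul_transpose, diagOne_add_diagonal] at this

/-- Proposition 4.4: for a row-substochastic `Q` and a tail-dependence matrix `Λ`,
`L(Q Λ Qᵀ)` is a tail-dependence matrix; in particular `L(Q Qᵀ)` is a tail-dependence matrix,
and `L(p pᵀ)` is a tail-dependence matrix for every `p ∈ [0,1]^d`. -/
theorem L_substochastic_tail_dependence {d m : ℕ} (Q : Matrix (Fin d) (Fin m) ℝ)
    (hQnonneg : ∀ i j, 0 ≤ Q i j) (hQrow : ∀ i, (∑ j, Q i j) ≤ 1)
    (Λ : Matrix (Fin m) (Fin m) ℝ) (hΛ : IsTailDependenceMatrix Λ) :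
    IsTailDependenceMatrix (diagOne (Q * Λ * Q.transpose)) ∧
    IsTailDependenceMatrix (diagOne (Q * Q.transpose)) ∧
    (∀ p : Fin d → ℝ, (∀ i, p i ∈ Set.Icc (0:ℝ) 1) →
      IsTailDependenceMatrix (diagOne (Matrix.vecMulVec p p))) := by
  refine ⟨isTailDependenceMatrix_diagOne_substochastic Q hQnonneg hQrow hΛ, ?_, fun p hp => ?_⟩
  · simpa using isTailDependenceMatrix_diagOne_substochastic Q hQnonneg hQrow
      (isTailDependenceMatrix_one m)
  · have hpp : Matrix.vecMulVec p p =
        Matrix.replicateCol (Fin 1) p * (1 : Matrix (Fin 1) (Fin 1) ℝ) *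
          (Matrix.replicateCol (Fin 1) p).transpose := by
      ext i j
      simp [Matrix.vecMulVec_apply, Matrix.mul_apply]
    rw [hpp]
    exact isTailDependenceMatrix_diagOne_substochastic (Matrix.replicateCol (Fin 1) p)
      (fun i _ => (hp i).1) (fun i => by simpa using (hp i).2) (isTailDependenceMatrix_one 1)
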